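/- arXiv:1209.2059 — 2 statements merged into one kernel-verified Lean document; each statement's English description precedes it below -/
import Mathlib

section
/- For any 0 < δ < 1 and any positive integers n, N the following holds: if u⁽¹⁾,…,u⁽ᵐ⁾ ∈ U(N)^n are pairwise distinct n-tuples of N×N unitary matrices such that any two distinct ones are δ-separated, then m ≤ (1+√(2/δ))^{2nN²}; in particular m ≤ exp(2√(2/δ)·nN²). -/
open scoped BigOperators Kronecker
open Matrix MeasureTheory

noncomputable section

namespace QE

/-- `N × N` complex matrices. -/
abbrev Mat (N : ℕ) : Type := Matrix (Fin N) (Fin N) ℂ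

/-- The unitary group `U(N)`. -/
abbrev U (N : ℕ) : Type := Matrix.unitaryGroup (Fin N) ℂ

/-- Frobenius (Hilbert-Schmidt) norm of a (possibly rectangular) complex matrix. -/
def frob {p q : ℕ} (ξ : Matrix (Fin p) (Fin q) ℂ) : ℝ :=
  Real.sqrt (∑ i, ∑ j, ‖ξ i j‖ ^ 2)

/-- `opN x y = ‖∑ⱼ xⱼ ⊗ conj (yⱼ)‖`: the operator norm, on `M_N(ℂ)` with the Frobenius
norm, of the linear map `ξ ↦ ∑ⱼ xⱼ ξ yⱼ*`. -/
def opN {n N : ℕ} (x y : Fin n → Mat N) : ℝ :=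
  sSup {r : ℝ | ∃ ξ : Mat N, frob ξ ≤ 1 ∧ r = frob (∑ j, x j * ξ * (y j)ᴴ)}

/-- `‖∑ⱼ xⱼ ⊗ yⱼ‖` (no conjugate on the second leg): equal to the operator norm of
`ξ ↦ ∑ⱼ xⱼ ξ yⱼᵀ`. -/
def tnorm {n N : ℕ} (x y : Fin n → Mat N) : ℝ :=
  opN x fun j => (y j).map (starRingEnd ℂ)

/-- Two `n`-tuples of `N × N` unitaries are `δ`-separated. -/
def Sep {n N : ℕ} (δ : ℝ) (u v : Fin n → U N) : Prop :=
  opN (fun j => (u j : Mat N)) (fun j => (v j : Mat N)) ≤ n * (1 - δ)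

/-- `S_ε(n,N)`: the set of `n`-tuples of `N × N` unitaries with `ε`-spectral gap. -/
def Sgap (ε : ℝ) (n N : ℕ) : Set (Fin n → U N) :=
  {u | ∀ ξ : Mat N, ξ.trace = 0 →
    frob (∑ j, (u j : Mat N) * ξ * ((u j : Mat N))ᴴ) ≤ ε * n * frob ξ}

/-- The distance `d(x,y) = (∑ⱼ ‖xⱼ - yⱼ‖₂²/N)^(1/2)` (normalized trace). -/
def dist2 {n N : ℕ} (x y : Fin n → Mat N) : ℝ :=
  Real.sqrt ((∑ j, frob (x j - y j) ^ 2) / N)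

/-- The two-sided-orbit distance `d'(x,y) = inf {d((a xⱼ b)ⱼ, y) : a, b ∈ U(N)}`. -/
def dist2' {n N : ℕ} (x y : Fin n → Mat N) : ℝ :=
  sInf {r : ℝ | ∃ a b : U N, r = dist2 (fun j => (a : Mat N) * x j * (b : Mat N)) y}

end QE

/-! ### Auxiliary lemmas -/

section Aux

open QE Metric Set

attribute [local instance] Matrix.frobeniusNormedAddCommGroup Matrix.frobeniusNormedSpace

lemma qe_frob_eq_norm {p q : ℕ} (ξ : Matrix (Fin p) (Fin q) ℂ) : frob ξ = ‖ξ‖ := by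
  rw [Matrix.frobenius_norm_def, frob, Real.sqrt_eq_rpow]
  congr 1
  refine Finset.sum_congr rfl fun i _ => Finset.sum_congr rfl fun j _ => ?_
  rw [show (2:ℝ) = ((2:ℕ):ℝ) by norm_num, Real.rpow_natCast]

lemma qe_frob_sq {p q : ℕ} (ξ : Matrix (Fin p) (Fin q) ℂ) :
    frob ξ ^ 2 = ∑ i, ∑ j, ‖ξ i j‖ ^ 2 :=
  Real.sq_sqrt (by positivity)

lemma qe_sum_sq_unitary {N : ℕ} (v : U N) :
    ∑ a, ∑ b, ‖(v : Mat N) a b‖ ^ 2 = N := by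
  have h1 : (v : Mat N) * (v : Mat N)ᴴ = 1 := by
    have := v.2
    rw [Matrix.mem_unitaryGroup_iff] at this
    simpa [Matrix.star_eq_conjTranspose] using this
  have h2 : ∀ a, ∑ b, ‖(v : Mat N) a b‖ ^ 2 = 1 := by
    intro a
    have := congrFun (congrFun h1 a) a
    rw [Matrix.mul_apply] at this
    have := congrArg Complex.re this
    simpa [Matrix.conjTranspose_apply, Complex.mul_conj,
      Complex.normSq_eq_norm_sq, Matrix.one_apply, Complex.re_sum, ← Complex.ofReal_pow] using this
  simp [h2]

lemma qe_norm_unitary {N : ℕ} (v : U N) : ‖(v : Mat N)‖ = Real.sqrt N := by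
  rw [← qe_frob_eq_norm, frob, qe_sum_sq_unitary]

lemma qe_norm_one_mat {N : ℕ} : ‖(1 : Mat N)‖ = Real.sqrt N := by
  rw [← qe_frob_eq_norm, frob]
  congr 1
  have h : ∀ i : Fin N, ∑ j, ‖(1 : Mat N) i j‖ ^ 2 = 1 := by
    intro i
    rw [Finset.sum_eq_single i (fun b _ hb => by simp [Matrix.one_apply, Ne.symm hb])
      (fun h => absurd (Finset.mem_univ i) h)]
    simp [Matrix.one_apply]
  simp [h]

/-- Key lower bound on `opN` for unitaries, obtained by testing on `ξ = N^{-1/2} • 1`. -/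
lemma qe_opN_lower {n N : ℕ} (hN : 0 < N) (u v : Fin n → U N) :
    frob (∑ j, (u j : Mat N) * (v j : Mat N)ᴴ) ≤
      Real.sqrt N * opN (fun j => (u j : Mat N)) (fun j => (v j : Mat N)) := by
  have hsN : (0:ℝ) < Real.sqrt N := Real.sqrt_pos.mpr (by exact_mod_cast hN)
  set c : ℂ := ((Real.sqrt N : ℝ) : ℂ)⁻¹ with hc
  have hcnorm : ‖c‖ = (Real.sqrt N)⁻¹ := by
    rw [hc, norm_inv, Complex.norm_real, Real.norm_eq_abs, abs_of_pos hsN]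
  set ξ₀ : Mat N := c • (1 : Mat N) with hξ₀
  have hfξ₀ : frob ξ₀ ≤ 1 := by
    rw [qe_frob_eq_norm, hξ₀, norm_smul, hcnorm, qe_norm_one_mat, inv_mul_cancel₀ hsN.ne']
  have hsum : ∑ j, (u j : Mat N) * ξ₀ * (v j : Mat N)ᴴ
      = c • ∑ j, (u j : Mat N) * (v j : Mat N)ᴴ := by
    rw [Finset.smul_sum]
    refine Finset.sum_congr rfl fun j _ => ?_
    rw [hξ₀, mul_smul_comm, mul_one, smul_mul_assoc]
  have hmem : (Real.sqrt N)⁻¹ * frob (∑ j, (u j : Mat N) * (v j : Mat N)ᴴ) ∈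
      {r : ℝ | ∃ ξ : Mat N, frob ξ ≤ 1 ∧
        r = frob (∑ j, (u j : Mat N) * ξ * (v j : Mat N)ᴴ)} := by
    refine ⟨ξ₀, hfξ₀, ?_⟩
    rw [hsum, qe_frob_eq_norm, qe_frob_eq_norm, norm_smul, hcnorm]
  have hbdd : BddAbove {r : ℝ | ∃ ξ : Mat N, frob ξ ≤ 1 ∧
      r = frob (∑ j, (u j : Mat N) * ξ * (v j : Mat N)ᴴ)} := by
    refine ⟨n * (Real.sqrt N * Real.sqrt N), ?_⟩
    rintro r ⟨ξ, hξ, rfl⟩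
    rw [qe_frob_eq_norm] at hξ ⊢
    calc ‖∑ j, (u j : Mat N) * ξ * (v j : Mat N)ᴴ‖
        ≤ ∑ j, ‖(u j : Mat N) * ξ * (v j : Mat N)ᴴ‖ := norm_sum_le _ _
      _ ≤ ∑ _j : Fin n, Real.sqrt N * Real.sqrt N := by
          refine Finset.sum_le_sum fun j _ => ?_
          calc ‖(u j : Mat N) * ξ * (v j : Mat N)ᴴ‖
              ≤ ‖(u j : Mat N) * ξ‖ * ‖(v j : Mat N)ᴴ‖ := Matrix.frobenius_norm_mul _ _
            _ ≤ ‖(u j : Mat N)‖ * ‖ξ‖ * ‖(v j : Mat N)ᴴ‖ := by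
                gcongr; exact Matrix.frobenius_norm_mul _ _
            _ ≤ Real.sqrt N * 1 * Real.sqrt N := by
                rw [Matrix.frobenius_norm_conjTranspose]
                gcongr <;> simp [qe_norm_unitary, hξ, le_refl]
            _ = Real.sqrt N * Real.sqrt N := by ring
      _ = n * (Real.sqrt N * Real.sqrt N) := by simp [mul_comm]
  have hle := le_csSup hbdd hmem
  rw [opN]
  calc frob (∑ j, (u j : Mat N) * (v j : Mat N)ᴴ)
      = Real.sqrt N * ((Real.sqrt N)⁻¹ * frob (∑ j, (u j : Mat N) * (v j : Mat N)ᴴ)) := by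
        field_simp
    _ ≤ Real.sqrt N * sSup _ := by gcongr

lemma qe_re_trace_le {N : ℕ} (M : Mat N) : (M.trace).re ≤ Real.sqrt N * frob M := by
  have h1 : (M.trace).re = ∑ i, (M i i).re := by
    simp [Matrix.trace, Matrix.diag, Complex.re_sum]
  have h2 : ∑ i, (M i i).re ≤ ∑ i, ‖M i i‖ :=
    Finset.sum_le_sum fun i _ => by exact Complex.re_le_norm _
  have h3 : (∑ i, ‖M i i‖) ^ 2 ≤ (N : ℝ) * ∑ i, ‖M i i‖ ^ 2 := by
    simpa using sq_sum_le_card_mul_sum_sq (s := (Finset.univ : Finset (Fin N)))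
      (f := fun i => ‖M i i‖)
  have h4 : ∑ i, ‖M i i‖ ^ 2 ≤ ∑ i, ∑ j, ‖M i j‖ ^ 2 :=
    Finset.sum_le_sum fun i _ => Finset.single_le_sum (f := fun j => ‖M i j‖ ^ 2)
      (fun j _ => by positivity) (Finset.mem_univ i)
  have hnn : (0:ℝ) ≤ ∑ i, ‖M i i‖ := Finset.sum_nonneg fun i _ => norm_nonneg _
  have h5 : ∑ i, ‖M i i‖ ≤ Real.sqrt N * frob M := by
    rw [frob, ← Real.sqrt_mul (by positivity), ← Real.sqrt_sq hnn]
    apply Real.sqrt_le_sqrt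
    calc (∑ i, ‖M i i‖) ^ 2 ≤ (N:ℝ) * ∑ i, ‖M i i‖ ^ 2 := h3
      _ ≤ (N:ℝ) * ∑ i, ∑ j, ‖M i j‖ ^ 2 := by gcongr
  linarith

lemma qe_frob_sub_sq {N : ℕ} (x y : U N) :
    frob ((x : Mat N) - (y : Mat N)) ^ 2
      = 2 * N - 2 * (((x : Mat N) * (y : Mat N)ᴴ).trace).re := by
  have hnn : (0:ℝ) ≤ ∑ a, ∑ b, ‖((x : Mat N) - (y : Mat N)) a b‖ ^ 2 := by positivity
  rw [frob, Real.sq_sqrt hnn]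
  have hterm : ∀ a b, ‖((x : Mat N) - (y : Mat N)) a b‖ ^ 2
      = ‖(x : Mat N) a b‖ ^ 2 + ‖(y : Mat N) a b‖ ^ 2
        - 2 * ((x : Mat N) a b * (starRingEnd ℂ) ((y : Mat N) a b)).re := by
    intro a b
    simp only [Matrix.sub_apply, Complex.sq_norm]
    exact Complex.normSq_sub _ _
  have htr : (((x : Mat N) * (y : Mat N)ᴴ).trace).re
      = ∑ a, ∑ b, ((x : Mat N) a b * (starRingEnd ℂ) ((y : Mat N) a b)).re := by
    simp [Matrix.trace, Matrix.diag, Matrix.mul_apply, Matrix.conjTranspose_apply,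
      Complex.re_sum]
  simp only [hterm, Finset.sum_sub_distrib, Finset.sum_add_distrib, ← Finset.mul_sum]
  rw [qe_sum_sq_unitary, qe_sum_sq_unitary, ← htr]
  ring

/-- Separation forces the tuples to be far apart in the (un-normalized) `L²` metric. -/
lemma qe_sep_dist {n N : ℕ} (hN : 0 < N) {δ : ℝ} (u v : Fin n → U N)
    (h : Sep δ u v) :
    2 * n * N * δ ≤ ∑ k, frob ((u k : Mat N) - (v k : Mat N)) ^ 2 := by
  have h : opN (fun j => (u j : Mat N)) (fun j => (v j : Mat N)) ≤ n * (1 - δ) := h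
  set M : Mat N := ∑ k, (u k : Mat N) * (v k : Mat N)ᴴ with hM
  have h1 : ∑ k, frob ((u k : Mat N) - (v k : Mat N)) ^ 2
      = 2 * n * N - 2 * M.trace.re := by
    simp only [qe_frob_sub_sq]
    rw [hM, Matrix.trace_sum, Complex.re_sum, Finset.sum_sub_distrib, ← Finset.mul_sum]
    simp only [Finset.sum_const, Finset.card_univ, Fintype.card_fin, nsmul_eq_mul]
    ring_nf
    rw [Finset.sum_mul]
  have h3 : frob M ≤ Real.sqrt N * (n * (1 - δ)) := by
    refine (qe_opN_lower hN u v).trans ?_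
    exact mul_le_mul_of_nonneg_left h (Real.sqrt_nonneg _)
  have h4 : M.trace.re ≤ (N : ℝ) * (n * (1 - δ)) := by
    calc M.trace.re ≤ Real.sqrt N * frob M := qe_re_trace_le M
      _ ≤ Real.sqrt N * (Real.sqrt N * (n * (1 - δ))) :=
          mul_le_mul_of_nonneg_left h3 (Real.sqrt_nonneg _)
      _ = (N:ℝ) * (n * (1 - δ)) := by rw [← mul_assoc, Real.mul_self_sqrt (by positivity)]
  have hexp : (N:ℝ) * (n * (1 - δ)) = n * N - n * N * δ := by ring
  rw [h1]
  linarith [hexp ▸ h4]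

/-- Volume packing bound: an `r`-separated family in the ball of radius `R` of a
finite-dimensional normed `ℝ`-vector space has at most `(1 + 2R/r)^dim` elements. -/
lemma qe_packing_card_le {E : Type*} [NormedAddCommGroup E] [NormedSpace ℝ E]
    [MeasurableSpace E] [BorelSpace E] [FiniteDimensional ℝ E]
    (μ : MeasureTheory.Measure E) [μ.IsAddHaarMeasure] {m : ℕ} (p : Fin m → E) {R r : ℝ}
    (hr : 0 < r) (hR : 0 ≤ R) (hball : ∀ i, ‖p i‖ ≤ R)
    (hsep : Pairwise fun i j => r ≤ ‖p i - p j‖) :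
    (m : ℝ) ≤ (1 + 2 * R / r) ^ (Module.finrank ℝ E) := by
  classical
  set d := Module.finrank ℝ E with hd
  have h2 : (0:ℝ) < r / 2 := by positivity
  have hdisj : Pairwise (Function.onFun Disjoint fun i => ball (p i) (r/2)) := by
    intro i j hij
    apply ball_disjoint_ball
    rw [dist_eq_norm]
    linarith [hsep hij]
  have hsub : (⋃ i, ball (p i) (r/2)) ⊆ ball (0:E) (R + r/2) := by
    rintro x hx
    simp only [mem_iUnion, mem_ball] at hx
    obtain ⟨i, hi⟩ := hx
    rw [mem_ball, dist_zero_right]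
    calc ‖x‖ ≤ dist x (p i) + ‖p i‖ := by
            rw [dist_eq_norm]; linarith [norm_le_norm_add_norm_sub' x (p i)]
      _ < r/2 + R := add_lt_add_of_lt_of_le hi (hball i)
      _ = R + r/2 := by ring
  have hmeas : μ (⋃ i, ball (p i) (r/2)) = ∑ i : Fin m, μ (ball (p i) (r/2)) := by
    rw [measure_iUnion hdisj fun i => measurableSet_ball, tsum_fintype]
  have hle : ∑ i : Fin m, μ (ball (p i) (r/2)) ≤ μ (ball (0:E) (R + r/2)) := by
    rw [← hmeas]; exact measure_mono hsub
  have hball_eq : ∀ i, μ (ball (p i) (r/2)) = ENNReal.ofReal ((r/2)^d) * μ (ball (0:E) 1) :=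
    fun i => Measure.addHaar_ball_of_pos μ _ h2
  have hbig : μ (ball (0:E) (R + r/2)) = ENNReal.ofReal ((R + r/2)^d) * μ (ball (0:E) 1) :=
    Measure.addHaar_ball_of_pos μ _ (by linarith)
  simp only [hball_eq, Finset.sum_const, Finset.card_univ, Fintype.card_fin, nsmul_eq_mul,
    hbig] at hle
  have hc0 : μ (ball (0:E) 1) ≠ 0 := (measure_ball_pos μ _ one_pos).ne'
  have hct : μ (ball (0:E) 1) ≠ ⊤ := measure_ball_lt_top.ne
  rw [← mul_assoc, ENNReal.mul_le_mul_iff_left hc0 hct] at hle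
  have hreal : (m:ℝ) * (r/2)^d ≤ (R + r/2)^d := by
    have := ENNReal.toReal_mono (by simp) hle
    rw [ENNReal.toReal_mul, ENNReal.toReal_ofReal (by positivity),
      ENNReal.toReal_ofReal (by positivity)] at this
    simpa using this
  have h1 : (m:ℝ) ≤ (R + r/2)^d / (r/2)^d := by
    rw [le_div_iff₀ (by positivity)]; exact hreal
  calc (m:ℝ) ≤ (R + r/2)^d / (r/2)^d := h1
    _ = ((R + r/2)/(r/2))^d := (div_pow _ _ _).symm
    _ = (1 + 2*R/r)^d := by congr 1; field_simp; ring

end Aux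

open QE in
/-- a pairwise δ-separated family in `U(N)ⁿ` has cardinality at most
`(1+√(2/δ))^(2nN²) ≤ exp(2√(2/δ)·nN²)`. -/
theorem stmt_2 {n N m : ℕ} (hn : 0 < n) (hN : 0 < N)
    (δ : ℝ) (hδ0 : 0 < δ) (hδ1 : δ < 1)
    (u : Fin m → (Fin n → U N)) (hinj : Function.Injective u)
    (hsep : ∀ i j, i ≠ j → Sep δ (u i) (u j)) :
    (m : ℝ) ≤ (1 + Real.sqrt (2 / δ)) ^ (2 * n * N ^ 2) ∧
      (m : ℝ) ≤ Real.exp (2 * Real.sqrt (2 / δ) * (n * N ^ 2)) := by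
  classical
  have hNr : (0:ℝ) < N := by exact_mod_cast hN
  have hnr : (0:ℝ) < n := by exact_mod_cast hn
  set s : ℝ := Real.sqrt (2 / δ) with hs
  have hs0 : 0 ≤ s := Real.sqrt_nonneg _
  set E := EuclideanSpace ℂ (Fin n × Fin N × Fin N) with hE
  letI : MeasurableSpace E := borel _
  haveI : BorelSpace E := ⟨rfl⟩
  let μ : Measure E := (Module.finBasis ℝ E).addHaar
  haveI : μ.IsAddHaarMeasure := inferInstance
  let p : Fin m → E := fun i =>
    (WithLp.equiv 2 _).symm (fun x : Fin n × Fin N × Fin N => (u i x.1 : Mat N) x.2.1 x.2.2)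
  set R : ℝ := Real.sqrt ((n:ℝ) * N) with hRdef
  set r : ℝ := Real.sqrt (2 * (n:ℝ) * N * δ) with hrdef
  have hr0 : 0 < r := Real.sqrt_pos.mpr (by positivity)
  have hball : ∀ i, ‖p i‖ ≤ R := by
    intro i
    rw [EuclideanSpace.norm_eq]
    apply le_of_eq
    rw [hRdef]
    congr 1
    rw [Fintype.sum_prod_type]
    have hk : ∀ k : Fin n, ∑ x : Fin N × Fin N, ‖(u i k : Mat N) x.1 x.2‖ ^ 2 = (N:ℝ) := by
      intro k
      rw [Fintype.sum_prod_type]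
      exact qe_sum_sq_unitary (u i k)
    simp only [WithLp.equiv_symm_apply, PiLp.toLp_apply, p]
    calc ∑ k : Fin n, ∑ x : Fin N × Fin N, ‖(u i k : Mat N) x.1 x.2‖ ^ 2
        = ∑ _k : Fin n, (N:ℝ) := Finset.sum_congr rfl fun k _ => hk k
      _ = (n:ℝ) * N := by simp [mul_comm]
  have hdist : Pairwise fun i j => r ≤ ‖p i - p j‖ := by
    intro i j hij
    have hsd := qe_sep_dist hN (u i) (u j) (hsep i j hij)
    have hnorm : ‖p i - p j‖
        = Real.sqrt (∑ k, frob ((u i k : Mat N) - (u j k : Mat N)) ^ 2) := by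
      rw [EuclideanSpace.norm_eq]
      congr 1
      rw [Fintype.sum_prod_type]
      refine Finset.sum_congr rfl fun k _ => ?_
      rw [qe_frob_sq, Fintype.sum_prod_type]
      refine Finset.sum_congr rfl fun a _ => Finset.sum_congr rfl fun b _ => ?_
      congr 1
    rw [hnorm, hrdef]
    exact Real.sqrt_le_sqrt (by exact_mod_cast hsd)
  have hfr : Module.finrank ℝ E = 2 * n * N ^ 2 := by
    have h := Module.finrank_mul_finrank ℝ ℂ E
    rw [Complex.finrank_real_complex, finrank_euclideanSpace] at h
    simp only [Fintype.card_prod, Fintype.card_fin] at h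
    rw [← h]
    ring
  have hpack := qe_packing_card_le μ p hr0 (Real.sqrt_nonneg _) hball hdist
  have hratio : 1 + 2 * R / r = 1 + s := by
    have hkey : r * s = 2 * R := by
      rw [hs, hrdef, hRdef, ← Real.sqrt_mul (by positivity)]
      have h4 : 2 * (n:ℝ) * N * δ * (2 / δ) = 2 ^ 2 * ((n:ℝ) * N) := by
        field_simp
      rw [h4, Real.sqrt_mul (by positivity), Real.sqrt_sq (by norm_num)]
    have : 2 * R / r = s := by
      rw [eq_comm, eq_div_iff hr0.ne']
      linarith [hkey]
    rw [this]
  rw [hfr, hratio] at hpack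
  refine ⟨hpack, hpack.trans ?_⟩
  have h1s : 1 + s ≤ Real.exp s := by
    have := Real.add_one_le_exp s
    linarith
  calc (1 + s) ^ (2 * n * N ^ 2) ≤ (Real.exp s) ^ (2 * n * N ^ 2) := by
        gcongr
    _ = Real.exp (((2 * n * N ^ 2 : ℕ) : ℝ) * s) := (Real.exp_nat_mul s _).symm
    _ = Real.exp (2 * s * ((n:ℝ) * (N:ℝ) ^ 2)) := by
        congr 1
        push_cast
        ring

end
end

section
/- Fix b, c > 0 and 0 < c' < c, 0 < b' < b. There exists an integer n₀ (depending only on b−b' and c−c', and independent of N) such that for all n ≥ n₀ and all N ≥ 1 the following holds: if A ⊆ U(N)^n is a set that cannot be covered by fewer than exp(b·nN²) open d-balls of radius c√n with centers in U(N)^n, then there exists a finite subset T' ⊆ A with card(T') ≥ exp(b'·nN²) such that d'(s,t) ≥ c'√n for all distinct s, t ∈ T'. -/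
open scoped BigOperators Kronecker
open Matrix MeasureTheory

noncomputable section

open Metric
open scoped ENNReal

open QE

/-- Volumetric packing bound: an `r`-separated subset of the ball of radius `R`
in a finite-dimensional real normed space has at most `((2R+r)/r)^dim` elements. -/
theorem packing_card_le {E : Type*} [NormedAddCommGroup E] [NormedSpace ℝ E]
    [FiniteDimensional ℝ E] (s : Finset E) (R r : ℝ) (hr : 0 < r) (hR : 0 ≤ R)
    (hball : ∀ x ∈ s, ‖x‖ ≤ R)
    (hsep : ∀ x ∈ s, ∀ y ∈ s, x ≠ y → r ≤ ‖x - y‖) :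
    (s.card : ℝ) ≤ ((2 * R + r) / r) ^ (Module.finrank ℝ E) := by
  classical
  rcases subsingleton_or_nontrivial E with hE | hE
  · -- all elements are equal, so card ≤ 1
    have : s.card ≤ 1 := by
      refine Finset.card_le_one.2 fun x hx y hy => Subsingleton.elim x y
    calc (s.card : ℝ) ≤ 1 := by exact_mod_cast this
      _ ≤ ((2 * R + r) / r) ^ (Module.finrank ℝ E) := by
          apply one_le_pow₀
          rw [le_div_iff₀ hr]
          nlinarith
  · borelize E
    set d := Module.finrank ℝ E with hd
    set μ := (Module.finBasis ℝ E).addHaar with hμ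
    have hdisj : (↑s : Set E).PairwiseDisjoint (fun x => ball x (r / 2)) := by
      intro x hx y hy hxy
      refine Set.disjoint_left.2 fun z hzx hzy => ?_
      have := hsep x hx y hy hxy
      have h1 : dist x z < r / 2 := by simpa [dist_comm] using hzx
      have h2 : dist z y < r / 2 := by simpa [dist_comm] using hzy
      have : dist x y < r := by
        calc dist x y ≤ dist x z + dist z y := dist_triangle _ _ _
          _ < r / 2 + r / 2 := by linarith
          _ = r := by ring
      rw [dist_eq_norm] at this
      linarith [hsep x hx y hy hxy]
    have hsub : (⋃ x ∈ s, ball x (r / 2)) ⊆ ball (0 : E) (R + r / 2) := by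
      intro z hz
      simp only [Set.mem_iUnion] at hz
      obtain ⟨x, hx, hzx⟩ := hz
      have : ‖z - x‖ < r / 2 := by simpa [dist_eq_norm] using hzx
      have hxR := hball x hx
      have : ‖z‖ < R + r / 2 := by
        calc ‖z‖ = ‖z - x + x‖ := by rw [sub_add_cancel]
          _ ≤ ‖z - x‖ + ‖x‖ := norm_add_le _ _
          _ < R + r / 2 := by linarith
      simpa [mem_ball, dist_eq_norm] using this
    have hmeas : μ (⋃ x ∈ s, ball x (r / 2)) = ∑ x ∈ s, μ (ball x (r / 2)) :=
      measure_biUnion_finset hdisj fun x _ => measurableSet_ball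
    have hballval : ∀ x : E, μ (ball x (r / 2)) =
        ENNReal.ofReal ((r / 2) ^ d) * μ (ball 0 1) := fun x =>
      Measure.addHaar_ball μ x (by linarith)
    have hbig : μ (ball (0 : E) (R + r / 2)) =
        ENNReal.ofReal ((R + r / 2) ^ d) * μ (ball 0 1) :=
      Measure.addHaar_ball μ 0 (by linarith)
    have hle : (s.card : ℝ≥0∞) * (ENNReal.ofReal ((r / 2) ^ d) * μ (ball 0 1)) ≤
        ENNReal.ofReal ((R + r / 2) ^ d) * μ (ball 0 1) := by
      rw [← hbig]
      calc (s.card : ℝ≥0∞) * (ENNReal.ofReal ((r / 2) ^ d) * μ (ball 0 1))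
          = ∑ x ∈ s, μ (ball x (r / 2)) := by
            simp [hballval, Finset.sum_const, nsmul_eq_mul]
        _ = μ (⋃ x ∈ s, ball x (r / 2)) := hmeas.symm
        _ ≤ μ (ball (0 : E) (R + r / 2)) := measure_mono hsub
    have hpos : μ (ball (0 : E) 1) ≠ 0 := (measure_ball_pos μ 0 one_pos).ne'
    have hfin : μ (ball (0 : E) 1) ≠ ⊤ := measure_ball_lt_top.ne
    have hle2 : (s.card : ℝ≥0∞) * ENNReal.ofReal ((r / 2) ^ d) ≤
        ENNReal.ofReal ((R + r / 2) ^ d) := by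
      rw [← mul_assoc] at hle
      exact (ENNReal.mul_le_mul_iff_left hpos hfin).1 hle
    have hr2 : (0:ℝ) < (r / 2) ^ d := pow_pos (by linarith) d
    have hle3 : (s.card : ℝ) * (r / 2) ^ d ≤ (R + r / 2) ^ d := by
      have := hle2
      rw [← ENNReal.ofReal_natCast, ← ENNReal.ofReal_mul (by positivity)] at this
      exact (ENNReal.ofReal_le_ofReal_iff (by positivity)).1 this
    rw [← le_div_iff₀ hr2] at hle3
    calc (s.card : ℝ) ≤ (R + r / 2) ^ d / (r / 2) ^ d := hle3
      _ = ((2 * R + r) / r) ^ d := by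
          rw [← div_pow]
          congr 1
          rw [div_eq_div_iff (by linarith) hr.ne']
          ring

/-- Generic existence of a maximal `P`-separated subset of `K`, given a uniform
cardinality bound on separated subsets. -/
theorem exists_max_separated {α : Type*} (K : Set α) (P : α → α → Prop) (B : ℕ)
    (hbound : ∀ T : Finset α, ↑T ⊆ K → (∀ x ∈ T, ∀ y ∈ T, x ≠ y → P x y) → T.card ≤ B) :
    ∃ T : Finset α, ↑T ⊆ K ∧ (∀ x ∈ T, ∀ y ∈ T, x ≠ y → P x y) ∧
      ∀ a ∈ K, a ∉ T → ∃ t ∈ T, ¬ P a t ∨ ¬ P t a := by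
  classical
  set C : Set ℕ := {k | ∃ T : Finset α, ↑T ⊆ K ∧
    (∀ x ∈ T, ∀ y ∈ T, x ≠ y → P x y) ∧ T.card = k} with hC
  have hne : C.Nonempty := ⟨0, ∅, by simp⟩
  have hbdd : BddAbove C := by
    refine ⟨B, fun k hk => ?_⟩
    obtain ⟨T, hT1, hT2, rfl⟩ := hk
    exact hbound T hT1 hT2
  obtain ⟨T, hT1, hT2, hTcard⟩ := Nat.sSup_mem hne hbdd
  refine ⟨T, hT1, hT2, fun a ha haT => ?_⟩
  by_contra hcon
  push_neg at hcon
  have hsep' : ∀ x ∈ insert a T, ∀ y ∈ insert a T, x ≠ y → P x y := by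
    intro x hx y hy hxy
    rw [Finset.mem_insert] at hx hy
    rcases hx with rfl | hx <;> rcases hy with rfl | hy
    · exact absurd rfl hxy
    · exact (hcon y hy).1
    · exact (hcon x hx).2
    · exact hT2 x hx y hy hxy
  have hmem : T.card + 1 ∈ C := by
    refine ⟨insert a T, ?_, hsep', ?_⟩
    · intro x hx
      rcases Finset.mem_insert.1 (by exact_mod_cast hx) with rfl | hx
      · exact ha
      · exact hT1 hx
    · rw [Finset.card_insert_of_notMem haT]
  have : T.card + 1 ≤ sSup C := le_csSup hbdd hmem
  omega

section MatrixFacts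

attribute [local instance] Matrix.frobeniusNormedAddCommGroup Matrix.frobeniusNormedSpace

variable {n N : ℕ}

lemma frob_eq_norm (ξ : Mat N) : frob ξ = ‖ξ‖ := by
  rw [frob, Matrix.frobenius_norm_def, Real.sqrt_eq_rpow]
  congr 1
  refine Finset.sum_congr rfl fun i _ => Finset.sum_congr rfl fun j _ => ?_
  rw [Real.rpow_two]

lemma frob_nonneg (ξ : Mat N) : 0 ≤ frob ξ := Real.sqrt_nonneg _

lemma frob_sub_rev (a b : Mat N) : frob (a - b) = frob (b - a) := by
  rw [frob_eq_norm, frob_eq_norm, norm_sub_rev]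

lemma frob_add_le (a b : Mat N) : frob (a + b) ≤ frob a + frob b := by
  rw [frob_eq_norm, frob_eq_norm, frob_eq_norm]; exact norm_add_le _ _

lemma frob_zero : frob (0 : Mat N) = 0 := by
  simp [frob]

lemma frob_sq_eq_retrace (ξ : Mat N) :
    ∑ i, ∑ j, ‖ξ i j‖ ^ 2 = (Matrix.trace (ξᴴ * ξ)).re := by
  rw [Matrix.trace]
  rw [Complex.re_sum]
  rw [Finset.sum_comm]
  refine Finset.sum_congr rfl fun j _ => ?_
  rw [Matrix.diag_apply, Matrix.mul_apply, Complex.re_sum]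
  refine Finset.sum_congr rfl fun i _ => ?_
  rw [Matrix.conjTranspose_apply]
  have : star (ξ i j) * ξ i j = ((Complex.normSq (ξ i j) : ℝ) : ℂ) := by
    rw [mul_comm]
    exact Complex.mul_conj _
  rw [this, Complex.ofReal_re, ← Complex.sq_norm]

lemma frob_unitary_conj (u v : U N) (ξ : Mat N) :
    frob ((u : Mat N) * ξ * (v : Mat N)) = frob ξ := by
  have hu : (u : Mat N)ᴴ * (u : Mat N) = 1 := by
    rw [← Matrix.star_eq_conjTranspose]
    exact Matrix.UnitaryGroup.star_mul_self u
  have hv : (v : Mat N) * (v : Mat N)ᴴ = 1 := by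
    rw [← Matrix.star_eq_conjTranspose]
    exact v.prop.2
  have key : ((u : Mat N) * ξ * (v : Mat N))ᴴ * ((u : Mat N) * ξ * (v : Mat N))
      = (v : Mat N)ᴴ * (ξᴴ * (ξ * (v : Mat N))) := by
    rw [Matrix.conjTranspose_mul, Matrix.conjTranspose_mul]
    simp only [Matrix.mul_assoc]
    rw [← Matrix.mul_assoc ((u : Mat N))ᴴ, hu, Matrix.one_mul]
  rw [frob, frob, frob_sq_eq_retrace, frob_sq_eq_retrace, key]
  have key2 : (v : Mat N)ᴴ * (ξᴴ * (ξ * (v : Mat N))) = (v : Mat N)ᴴ * (ξᴴ * ξ) * (v : Mat N) := by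
    simp only [Matrix.mul_assoc]
  rw [key2, Matrix.trace_mul_cycle, ← Matrix.mul_assoc, hv, Matrix.one_mul]

lemma frob_unitary_mul (w : U N) (ξ : Mat N) : frob ((w : Mat N) * ξ) = frob ξ := by
  have := frob_unitary_conj w 1 ξ
  simpa using this

lemma frob_mul_unitary (ξ : Mat N) (w : U N) : frob (ξ * (w : Mat N)) = frob ξ := by
  have := frob_unitary_conj 1 w ξ
  simpa using this

lemma frob_unitary (u : U N) : frob (u : Mat N) = Real.sqrt N := by
  rw [frob, frob_sq_eq_retrace]
  have hu : (u : Mat N)ᴴ * (u : Mat N) = 1 := by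
    rw [← Matrix.star_eq_conjTranspose]
    exact Matrix.UnitaryGroup.star_mul_self u
  rw [hu, Matrix.trace_one]
  simp

lemma dist2_nonneg (x y : Fin n → Mat N) : 0 ≤ dist2 x y := Real.sqrt_nonneg _

lemma dist2_self (x : Fin n → Mat N) : dist2 x x = 0 := by
  simp [dist2, frob_zero]

lemma dist2_comm (x y : Fin n → Mat N) : dist2 x y = dist2 y x := by
  unfold dist2
  rw [show (∑ j, frob (x j - y j) ^ 2) = ∑ j, frob (y j - x j) ^ 2 from
    Finset.sum_congr rfl fun j _ => by rw [frob_sub_rev]]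

lemma dist2_eq_norm_div (x y : Fin n → Mat N) :
    dist2 x y = Real.sqrt (∑ j, frob (x j - y j) ^ 2) / Real.sqrt N := by
  rw [dist2, Real.sqrt_div (by positivity)]

lemma sqrt_sum_sq_triangle (b c : Fin n → ℝ) :
    Real.sqrt (∑ j, (b j + c j) ^ 2) ≤
      Real.sqrt (∑ j, b j ^ 2) + Real.sqrt (∑ j, c j ^ 2) := by
  have hB : ∀ g : Fin n → ℝ, Real.sqrt (∑ j, g j ^ 2) =
      ‖(WithLp.equiv 2 (Fin n → ℝ)).symm g‖ := by
    intro g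
    rw [EuclideanSpace.norm_eq]
    congr 1
    refine Finset.sum_congr rfl fun j _ => ?_
    rw [WithLp.equiv_symm_apply, PiLp.toLp_apply, Real.norm_eq_abs, sq_abs]
  rw [hB, hB, hB]
  have : (WithLp.equiv 2 (Fin n → ℝ)).symm (fun j => b j + c j) =
      (WithLp.equiv 2 (Fin n → ℝ)).symm b + (WithLp.equiv 2 (Fin n → ℝ)).symm c := by
    rfl
  rw [this]
  exact norm_add_le _ _

lemma dist2_triangle (x y z : Fin n → Mat N) : dist2 x z ≤ dist2 x y + dist2 y z := by
  rw [dist2_eq_norm_div, dist2_eq_norm_div, dist2_eq_norm_div, ← add_div]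
  have hnum : Real.sqrt (∑ j, frob (x j - z j) ^ 2) ≤
      Real.sqrt (∑ j, frob (x j - y j) ^ 2) + Real.sqrt (∑ j, frob (y j - z j) ^ 2) := by
    refine le_trans ?_ (sqrt_sum_sq_triangle (fun j => frob (x j - y j))
      (fun j => frob (y j - z j)))
    apply Real.sqrt_le_sqrt
    refine Finset.sum_le_sum fun j _ => ?_
    have h1 : frob (x j - z j) ≤ frob (x j - y j) + frob (y j - z j) := by
      have : x j - z j = (x j - y j) + (y j - z j) := by abel
      rw [this]
      exact frob_add_le _ _
    exact pow_le_pow_left₀ (frob_nonneg _) h1 2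
  rcases Nat.eq_zero_or_pos N with hN | hN
  · simp [hN]
  · have hsN : (0:ℝ) < Real.sqrt N := Real.sqrt_pos.2 (by exact_mod_cast hN)
    exact div_le_div_of_nonneg_right hnum hsN.le

lemma dist2_unitary_conj (u v : U N) (x y : Fin n → Mat N) :
    dist2 (fun j => (u : Mat N) * x j * (v : Mat N)) (fun j => (u : Mat N) * y j * (v : Mat N))
      = dist2 x y := by
  unfold dist2
  rw [show (∑ j, frob ((u : Mat N) * x j * (v : Mat N) - (u : Mat N) * y j * (v : Mat N)) ^ 2)
      = ∑ j, frob (x j - y j) ^ 2 from Finset.sum_congr rfl fun j _ => by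
    rw [show (u : Mat N) * x j * (v : Mat N) - (u : Mat N) * y j * (v : Mat N)
        = (u : Mat N) * (x j - y j) * (v : Mat N) by
      rw [Matrix.mul_sub, Matrix.sub_mul], frob_unitary_conj]]

lemma dist2_le_of_frob_le (hN : 0 < N) {x y : Fin n → Mat N} {m : ℝ} (hm : 0 ≤ m)
    (h : ∀ j, frob (x j - y j) ≤ m) :
    dist2 x y ≤ m * Real.sqrt n / Real.sqrt N := by
  rw [dist2_eq_norm_div]
  have hsN : (0:ℝ) < Real.sqrt N := Real.sqrt_pos.2 (by exact_mod_cast hN)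
  apply div_le_div_of_nonneg_right ?_ hsN.le
  have h1 : (∑ j, frob (x j - y j) ^ 2) ≤ ∑ _j : Fin n, m ^ 2 :=
    Finset.sum_le_sum fun j _ => pow_le_pow_left₀ (frob_nonneg _) (h j) 2
  refine (Real.sqrt_le_sqrt h1).trans ?_
  rw [Finset.sum_const, Finset.card_univ, Fintype.card_fin, nsmul_eq_mul]
  rw [Real.sqrt_mul (by positivity), Real.sqrt_sq hm]
  rw [mul_comm]

lemma dist2'_le (x y : Fin n → Mat N) : dist2' x y ≤ dist2 x y := by
  refine csInf_le ⟨0, ?_⟩ ⟨1, 1, by simp⟩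
  rintro r ⟨a, b, rfl⟩
  exact dist2_nonneg _ _

lemma dist2'_lt {x y : Fin n → Mat N} {r : ℝ} (h : dist2' x y < r) :
    ∃ a b : U N, dist2 (fun j => (a : Mat N) * x j * (b : Mat N)) y < r := by
  have hne : {r : ℝ | ∃ a b : U N,
      r = dist2 (fun j => (a : Mat N) * x j * (b : Mat N)) y}.Nonempty :=
    ⟨_, 1, 1, rfl⟩
  obtain ⟨s, hs, hlt⟩ := exists_lt_of_csInf_lt hne h
  obtain ⟨a, b', rfl⟩ := hs
  exact ⟨a, b', hlt⟩

lemma unitary_cancel (u v : U N) (a : Mat N) :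
    ((u⁻¹ : U N) : Mat N) * ((u : Mat N) * a * (v : Mat N)) * ((v⁻¹ : U N) : Mat N) = a := by
  have h1 : ((u⁻¹ : U N) : Mat N) * (u : Mat N) = 1 := by
    rw [Matrix.UnitaryGroup.inv_val]
    exact u.prop.1
  have h2 : (v : Mat N) * ((v⁻¹ : U N) : Mat N) = 1 := by
    rw [Matrix.UnitaryGroup.inv_val]
    exact v.prop.2
  simp only [← Matrix.mul_assoc]
  rw [h1, Matrix.one_mul, Matrix.mul_assoc, h2, Matrix.mul_one]

/-- A `δ√N`-net of the unitary group of controlled cardinality. -/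
lemma exists_net (N : ℕ) (hN : 1 ≤ N) {δ : ℝ} (hδ : 0 < δ) :
    ∃ S : Finset (U N), (S.card : ℝ) ≤ ((2 + δ) / δ) ^ (2 * N ^ 2) ∧
      ∀ u : U N, ∃ s ∈ S, frob ((u : Mat N) - (s : Mat N)) < δ * Real.sqrt N := by
  classical
  have hNpos : (0:ℝ) < N := by exact_mod_cast hN
  have hsN : (0:ℝ) < Real.sqrt N := Real.sqrt_pos.2 hNpos
  have hrpos : (0:ℝ) < δ * Real.sqrt N := by positivity
  have hinj : Function.Injective (fun u : U N => (u : Mat N)) := fun a b h => Subtype.ext h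
  have hbound : ∀ T : Finset (U N),
      (∀ x ∈ T, ∀ y ∈ T, x ≠ y → δ * Real.sqrt N ≤ frob ((x : Mat N) - (y : Mat N))) →
      (T.card : ℝ) ≤ ((2 + δ) / δ) ^ (2 * N ^ 2) := by
    intro T hsep
    have hcard : (T.image (fun u : U N => (u : Mat N))).card = T.card :=
      Finset.card_image_of_injective _ hinj
    have hpack := packing_card_le (T.image (fun u : U N => (u : Mat N)))
      (Real.sqrt N) (δ * Real.sqrt N) hrpos hsN.le
      (by
        intro ξ hξ
        obtain ⟨u, hu, rfl⟩ := Finset.mem_image.1 hξ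
        rw [← frob_eq_norm, frob_unitary])
      (by
        intro ξ hξ ζ hζ hne
        obtain ⟨u, hu, rfl⟩ := Finset.mem_image.1 hξ
        obtain ⟨w, hw, rfl⟩ := Finset.mem_image.1 hζ
        have huw : u ≠ w := fun h => hne (by rw [h])
        rw [← frob_eq_norm]
        exact hsep u hu w hw huw)
    rw [hcard] at hpack
    refine hpack.trans (le_of_eq ?_)
    have hrank : Module.finrank ℝ (Mat N) = 2 * N ^ 2 := by
      rw [Module.finrank_matrix, Complex.finrank_real_complex, Fintype.card_fin]
      ring
    rw [hrank]
    congr 1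
    field_simp
  obtain ⟨S, -, hSsep, hSmax⟩ := exists_max_separated (Set.univ : Set (U N))
    (fun u v : U N => δ * Real.sqrt N ≤ frob ((u : Mat N) - (v : Mat N)))
    ⌈((2 + δ) / δ) ^ (2 * N ^ 2)⌉₊
    (fun T _ h2 => by
      have h3 := (hbound T h2).trans (Nat.le_ceil _)
      exact_mod_cast h3)
  refine ⟨S, hbound S hSsep, fun u => ?_⟩
  by_cases hu : u ∈ S
  · refine ⟨u, hu, ?_⟩
    simpa [sub_self, frob_zero] using hrpos
  · obtain ⟨t, ht, hcase⟩ := hSmax u (Set.mem_univ u) hu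
    rcases hcase with h | h
    · exact ⟨t, ht, lt_of_not_ge h⟩
    · refine ⟨t, ht, ?_⟩
      rw [frob_sub_rev]
      exact lt_of_not_ge h

/-- A cardinality bound on `ρ`-separated (w.r.t. `dist2`) sets of unitary tuples. -/
lemma sep_tuple_bound {n N : ℕ} (hN : 1 ≤ N) {ρ : ℝ} (hρ : 0 < ρ) :
    ∃ B : ℕ, ∀ T : Finset (Fin n → U N),
      (∀ x ∈ T, ∀ y ∈ T, x ≠ y →
        ρ ≤ dist2 (fun j => (x j : Mat N)) (fun j => (y j : Mat N))) →
      T.card ≤ B := by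
  classical
  have hNpos : (0:ℝ) < N := by exact_mod_cast hN
  have hsN : (0:ℝ) < Real.sqrt N := Real.sqrt_pos.2 hNpos
  set E := PiLp 2 (fun _ : Fin n => Mat N) with hE
  haveI : FiniteDimensional ℝ E := by infer_instance
  set g : (Fin n → U N) → E := fun u => (WithLp.equiv 2 (∀ _ : Fin n, Mat N)).symm
    (fun j => (u j : Mat N)) with hg
  have hginj : Function.Injective g := by
    intro a b h
    funext j
    exact Subtype.ext (congrFun (by exact congrArg (WithLp.equiv 2 _) h) j)
  have hgnorm : ∀ u v : Fin n → U N,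
      ‖g u - g v‖ = Real.sqrt (∑ j, frob ((u j : Mat N) - (v j : Mat N)) ^ 2) := by
    intro u v
    rw [PiLp.norm_eq_of_L2]
    congr 1
    refine Finset.sum_congr rfl fun j _ => ?_
    rw [show (g u - g v) j = (u j : Mat N) - (v j : Mat N) from rfl, ← frob_eq_norm]
  have hgbound : ∀ u : Fin n → U N, ‖g u‖ = Real.sqrt (n * N) := by
    intro u
    rw [PiLp.norm_eq_of_L2]
    congr 1
    rw [show (∑ j, ‖g u j‖ ^ 2) = ∑ _j : Fin n, (N:ℝ) from Finset.sum_congr rfl fun j _ => by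
      rw [show g u j = (u j : Mat N) from rfl, ← frob_eq_norm, frob_unitary,
        Real.sq_sqrt hNpos.le]]
    rw [Finset.sum_const, Finset.card_univ, Fintype.card_fin, nsmul_eq_mul]
  refine ⟨⌈((2 * Real.sqrt (n * N) + ρ * Real.sqrt N) / (ρ * Real.sqrt N))
    ^ (Module.finrank ℝ E)⌉₊, fun T hsep => ?_⟩
  have hpack := packing_card_le (T.image g) (Real.sqrt (n * N)) (ρ * Real.sqrt N)
    (by positivity) (Real.sqrt_nonneg _)
    (by
      intro ξ hξ
      obtain ⟨u, hu, rfl⟩ := Finset.mem_image.1 hξ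
      rw [hgbound])
    (by
      intro ξ hξ ζ hζ hne
      obtain ⟨u, hu, rfl⟩ := Finset.mem_image.1 hξ
      obtain ⟨w, hw, rfl⟩ := Finset.mem_image.1 hζ
      have huw : u ≠ w := fun h => hne (by rw [h])
      have hd := hsep u hu w hw huw
      rw [dist2_eq_norm_div, ← hgnorm] at hd
      rw [le_div_iff₀ hsN] at hd
      linarith [hd])
  rw [Finset.card_image_of_injective _ hginj] at hpack
  have := hpack.trans (Nat.le_ceil _)
  exact_mod_cast this

end MatrixFacts


set_option maxHeartbeats 2000000 in
open QE in
/-- from a lower bound on the covering number by `d`-balls of radius `c√n`,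
extract a large subset that is `c'√n`-separated for the orbit distance `d'`. -/
theorem stmt_5 (b c b' c' : ℝ) (hb : 0 < b) (hc : 0 < c)
    (hc'0 : 0 < c') (hc' : c' < c) (hb'0 : 0 < b') (hb' : b' < b) :
    ∃ n₀ : ℕ, ∀ n : ℕ, n₀ ≤ n → ∀ N : ℕ, 1 ≤ N →
      ∀ A : Set (Fin n → U N),
        (∀ F : Finset (Fin n → U N),
          (A ⊆ ⋃ x ∈ F, {y : Fin n → U N |
              dist2 (fun j => ((x j : Mat N))) (fun j => ((y j : Mat N))) < c * Real.sqrt n}) →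
          Real.exp (b * n * N ^ 2) ≤ (F.card : ℝ)) →
        ∃ T' : Finset (Fin n → U N),
          (↑T' : Set (Fin n → U N)) ⊆ A ∧
          Real.exp (b' * n * N ^ 2) ≤ (T'.card : ℝ) ∧
          ∀ s ∈ T', ∀ t ∈ T', s ≠ t →
            c' * Real.sqrt n ≤
              dist2' (fun j => ((s j : Mat N))) (fun j => ((t j : Mat N))) := by
  classical
  set δ : ℝ := (c - c') / 2 with hδdef
  have hδ : 0 < δ := by rw [hδdef]; linarith
  set L : ℝ := Real.log ((2 + δ) / δ) with hLdef
  have hbase1 : (1:ℝ) ≤ (2 + δ) / δ := by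
    rw [le_div_iff₀ hδ]; linarith
  have hL0 : 0 ≤ L := Real.log_nonneg hbase1
  have hbb' : (0:ℝ) < b - b' := by linarith
  refine ⟨⌈4 * L / (b - b')⌉₊ + 1, fun n hn N hN A hcov => ?_⟩
  have hn1 : 1 ≤ n := le_trans (by omega) hn
  have hnpos : (0:ℝ) < n := by exact_mod_cast hn1
  have hsn : (0:ℝ) < Real.sqrt n := Real.sqrt_pos.2 hnpos
  have hNpos : (0:ℝ) < N := by exact_mod_cast hN
  have hsN : (0:ℝ) < Real.sqrt N := Real.sqrt_pos.2 hNpos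
  have hN2 : (1:ℝ) ≤ (N:ℝ) ^ 2 := one_le_pow₀ (by exact_mod_cast hN)
  have hnL : 4 * L ≤ (b - b') * n := by
    have h1 : (4 * L / (b - b') : ℝ) ≤ (⌈4 * L / (b - b')⌉₊ : ℝ) := Nat.le_ceil _
    have h2 : ((⌈4 * L / (b - b')⌉₊ + 1 : ℕ) : ℝ) ≤ (n : ℝ) := by exact_mod_cast hn
    rw [div_le_iff₀ hbb'] at h1
    push_cast at h2
    nlinarith
  obtain ⟨S, hScard, hSnet⟩ := exists_net N hN hδ
  have hρ : (0:ℝ) < c' * Real.sqrt n := by positivity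
  obtain ⟨B, hB⟩ := sep_tuple_bound (n := n) hN hρ
  obtain ⟨T', hT'A, hT'sep, hT'max⟩ := exists_max_separated A
    (fun s t => c' * Real.sqrt n ≤ dist2' (fun j => (s j : Mat N)) (fun j => (t j : Mat N))) B
    (fun T _ hTsep => hB T (fun x hx y hy hxy =>
      le_trans (hTsep x hx y hy hxy) (dist2'_le _ _)))
  refine ⟨T', hT'A, ?_, hT'sep⟩
  -- Build the covering family of centers
  set φ : (Fin n → U N) × (U N × U N) → (Fin n → U N) :=
    fun p => fun j => p.2.1 * p.1 j * p.2.2 with hφ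
  set F : Finset (Fin n → U N) := Finset.image φ (T' ×ˢ S ×ˢ S) with hF
  have hcover : A ⊆ ⋃ x ∈ F, {y : Fin n → U N |
      dist2 (fun j => ((x j : Mat N))) (fun j => ((y j : Mat N))) < c * Real.sqrt n} := by
    intro a ha
    have key : ∃ t ∈ T', ∃ u v : U N,
        dist2 (fun j => (u : Mat N) * (t j : Mat N) * (v : Mat N))
          (fun j => (a j : Mat N)) < c' * Real.sqrt n := by
      by_cases haT : a ∈ T'
      · refine ⟨a, haT, 1, 1, ?_⟩
        have : (fun j => ((1 : U N) : Mat N) * (a j : Mat N) * ((1 : U N) : Mat N))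
            = fun j => (a j : Mat N) := by
          funext j; simp
        rw [this, dist2_self]
        exact hρ
      · obtain ⟨t, ht, hcase⟩ := hT'max a ha haT
        rcases hcase with h | h
        · -- dist2' (coe a) (coe t) < c'√n
          obtain ⟨u, v, huv⟩ := dist2'_lt (lt_of_not_ge h)
          refine ⟨t, ht, u⁻¹, v⁻¹, ?_⟩
          have heq := dist2_unitary_conj (u⁻¹) (v⁻¹)
            (fun j => (u : Mat N) * (a j : Mat N) * (v : Mat N)) (fun j => (t j : Mat N))
          have hfix : (fun j => ((u⁻¹ : U N) : Mat N) *
              ((fun j => (u : Mat N) * (a j : Mat N) * (v : Mat N)) j) * ((v⁻¹ : U N) : Mat N))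
              = fun j => (a j : Mat N) := by
            funext j
            exact unitary_cancel u v _
          rw [hfix] at heq
          rw [dist2_comm]
          rw [← heq] at huv
          exact huv
        · obtain ⟨u, v, huv⟩ := dist2'_lt (lt_of_not_ge h)
          exact ⟨t, ht, u, v, huv⟩
    obtain ⟨t, ht, u, v, hd⟩ := key
    obtain ⟨s, hs, hsu⟩ := hSnet u
    obtain ⟨s', hs', hsv⟩ := hSnet v
    refine Set.mem_iUnion₂.2 ⟨φ (t, (s, s')), ?_, ?_⟩
    · exact Finset.mem_image.2 ⟨(t, (s, s')), by
        simp [Finset.mem_product, ht, hs, hs'], rfl⟩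
    · show dist2 (fun j => ((φ (t, (s, s')) j : Mat N))) (fun j => (a j : Mat N))
        < c * Real.sqrt n
      have hcoe : (fun j => ((φ (t, (s, s')) j : Mat N)))
          = fun j => (s : Mat N) * (t j : Mat N) * (s' : Mat N) := by
        funext j
        simp [hφ]
      rw [hcoe]
      have htri := dist2_triangle (fun j => (s : Mat N) * (t j : Mat N) * (s' : Mat N))
        (fun j => (u : Mat N) * (t j : Mat N) * (v : Mat N)) (fun j => (a j : Mat N))
      have hcoord : ∀ j, frob ((s : Mat N) * (t j : Mat N) * (s' : Mat N)
          - (u : Mat N) * (t j : Mat N) * (v : Mat N))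
          ≤ frob ((s : Mat N) - (u : Mat N)) + frob ((s' : Mat N) - (v : Mat N)) := by
        intro j
        have hdecomp : (s : Mat N) * (t j : Mat N) * (s' : Mat N)
            - (u : Mat N) * (t j : Mat N) * (v : Mat N)
            = ((s : Mat N) - (u : Mat N)) * ((t j : Mat N) * (s' : Mat N))
              + ((u : Mat N) * (t j : Mat N)) * ((s' : Mat N) - (v : Mat N)) := by
          rw [Matrix.sub_mul, Matrix.mul_sub]
          simp only [Matrix.mul_assoc]
          abel
        rw [hdecomp]
        refine (frob_add_le _ _).trans ?_
        have e1 : frob (((s : Mat N) - (u : Mat N)) * ((t j : Mat N) * (s' : Mat N)))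
            = frob ((s : Mat N) - (u : Mat N)) := by
          have : (t j : Mat N) * (s' : Mat N) = ((t j * s' : U N) : Mat N) := by simp
          rw [this, frob_mul_unitary]
        have e2 : frob (((u : Mat N) * (t j : Mat N)) * ((s' : Mat N) - (v : Mat N)))
            = frob ((s' : Mat N) - (v : Mat N)) := by
          have : (u : Mat N) * (t j : Mat N) = ((u * t j : U N) : Mat N) := by simp
          rw [this, frob_unitary_mul]
        rw [e1, e2]
      have hm : frob ((s : Mat N) - (u : Mat N)) + frob ((s' : Mat N) - (v : Mat N))
          < 2 * δ * Real.sqrt N := by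
        rw [frob_sub_rev] at *
        have h1 := hsu
        have h2 := hsv
        rw [frob_sub_rev] at h1 h2
        linarith
      have h1 : dist2 (fun j => (s : Mat N) * (t j : Mat N) * (s' : Mat N))
          (fun j => (u : Mat N) * (t j : Mat N) * (v : Mat N))
          ≤ (frob ((s : Mat N) - (u : Mat N)) + frob ((s' : Mat N) - (v : Mat N)))
            * Real.sqrt n / Real.sqrt N :=
        dist2_le_of_frob_le (by exact_mod_cast hN)
          (add_nonneg (frob_nonneg _) (frob_nonneg _)) hcoord
      have h2 : (frob ((s : Mat N) - (u : Mat N)) + frob ((s' : Mat N) - (v : Mat N)))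
          * Real.sqrt n / Real.sqrt N < 2 * δ * Real.sqrt N * Real.sqrt n / Real.sqrt N := by
        gcongr
      have hsimp : 2 * δ * Real.sqrt N * Real.sqrt n / Real.sqrt N = 2 * δ * Real.sqrt n := by
        field_simp
      rw [hsimp] at h2
      have hsum : 2 * δ * Real.sqrt n + c' * Real.sqrt n = c * Real.sqrt n := by
        rw [hδdef]; ring
      have hd1 := lt_of_le_of_lt h1 h2
      calc dist2 (fun j => (s : Mat N) * (t j : Mat N) * (s' : Mat N))
            (fun j => (a j : Mat N)) ≤ _ + _ := htri
        _ < 2 * δ * Real.sqrt n + c' * Real.sqrt n := by linarith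
        _ = c * Real.sqrt n := hsum
  have hFlow := hcov F hcover
  have hFcard : (F.card : ℝ) ≤ (T'.card : ℝ) * ((S.card : ℝ) * (S.card : ℝ)) := by
    have h1 := Finset.card_image_le (s := T' ×ˢ S ×ˢ S) (f := φ)
    rw [Finset.card_product, Finset.card_product] at h1
    exact_mod_cast h1
  have hSexp : (S.card : ℝ) ≤ Real.exp (2 * (N:ℝ) ^ 2 * L) := by
    refine hScard.trans ?_
    have hbpos : (0:ℝ) < (2 + δ) / δ := by positivity
    rw [show (2 + δ) / δ = Real.exp L from (Real.exp_log hbpos).symm, ← Real.exp_nat_mul]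
    exact Real.exp_le_exp.2 (le_of_eq (by push_cast; ring))
  have hS0 : (0:ℝ) ≤ (S.card : ℝ) := Nat.cast_nonneg _
  have hT0 : (0:ℝ) ≤ (T'.card : ℝ) := Nat.cast_nonneg _
  have hcomb : Real.exp (b * n * N ^ 2) ≤ (T'.card : ℝ) * Real.exp (4 * (N:ℝ) ^ 2 * L) := by
    refine hFlow.trans (hFcard.trans ?_)
    have h2 : (S.card : ℝ) * (S.card : ℝ)
        ≤ Real.exp (2 * (N:ℝ) ^ 2 * L) * Real.exp (2 * (N:ℝ) ^ 2 * L) :=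
      mul_le_mul hSexp hSexp hS0 (Real.exp_pos _).le
    rw [← Real.exp_add, show (2 * (N:ℝ) ^ 2 * L + 2 * (N:ℝ) ^ 2 * L) = 4 * (N:ℝ) ^ 2 * L
      from by ring] at h2
    exact mul_le_mul_of_nonneg_left h2 hT0
  have hepos : (0:ℝ) < Real.exp (4 * (N:ℝ) ^ 2 * L) := Real.exp_pos _
  have hfinal : Real.exp (b' * n * N ^ 2)
      ≤ Real.exp (b * n * N ^ 2) / Real.exp (4 * (N:ℝ) ^ 2 * L) := by
    rw [← Real.exp_sub]
    apply Real.exp_le_exp.2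
    nlinarith [mul_nonneg (show (0:ℝ) ≤ (b - b') * n - 4 * L from by linarith)
      (show (0:ℝ) ≤ (N:ℝ) ^ 2 from by positivity)]
  exact hfinal.trans ((div_le_iff₀ hepos).2 hcomb)
end
end
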